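/- arXiv:1204.4495 — 4 statements merged into one kernel-verified Lean document; each statement's English description precedes it below -/
import Mathlib

section
/- Let X be a unital operator space contained in an operator system S ⊆ B(H), let φ: S → S be a unital completely contractive map with φ(x) = x for all x ∈ X, and let h ∈ S be self-adjoint. Then for every x ∈ X and λ ∈ ℂ, ‖x + λ(φ(h) − h)‖ ≥ ‖x‖; consequently the quotient seminorm of x modulo span{φ(h) − h} equals ‖x‖. -/
set_option synthInstance.maxHeartbeats 1000000
set_option maxHeartbeats 1000000

noncomputable section

open scoped ComplexOrder

/-- A positive operator on a complex inner-product space: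
`⟪v, T v⟫ ≥ 0` for every vector `v`. -/
def IsPosOp {E : Type} [NormedAddCommGroup E] [InnerProductSpace ℂ E]
    (T : E →L[ℂ] E) : Prop := ∀ v : E, 0 ≤ (inner ℂ v (T v) : ℂ)

/-- `B(H)`, the bounded operators on `H`. -/
abbrev BH (H : Type) [NormedAddCommGroup H] [InnerProductSpace ℂ H] : Type := H →L[ℂ] H

section Defs

variable {H K : Type}
variable [NormedAddCommGroup H] [InnerProductSpace ℂ H] [CompleteSpace H]
variable [NormedAddCommGroup K] [InnerProductSpace ℂ K] [CompleteSpace K]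

/-- The amplification of a matrix over `B(H)` to an operator on the Hilbert space
`ℓ²`-direct sum of `n` copies of `H`. -/
def amp {n : ℕ} (A : Matrix (Fin n) (Fin n) (BH H)) :
    (PiLp 2 fun _ : Fin n => H) →L[ℂ] PiLp 2 fun _ : Fin n => H :=
  ∑ i : Fin n, ∑ j : Fin n,
    ((PiLp.continuousLinearEquiv 2 ℂ fun _ : Fin n => H).symm.toContinuousLinearMap).comp
      ((ContinuousLinearMap.pi (Pi.single i (ContinuousLinearMap.id ℂ H))).comp
        ((A i j).comp
          ((ContinuousLinearMap.proj j).comp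
            ((PiLp.continuousLinearEquiv 2 ℂ fun _ : Fin n => H).toContinuousLinearMap))))

/-- The matrix norms defining the (concrete) operator space structure of `B(H)`. -/
def matNorm {n : ℕ} (A : Matrix (Fin n) (Fin n) (BH H)) : ℝ := ‖amp A‖

/-- The quotient matrix (semi)norm modulo a subset `J ⊆ B(H)`:
`‖[x i j] + Mₙ(J)‖ = inf { ‖[x i j + y i j]‖ : y i j ∈ J }`. -/
def qnorm (J : Set (BH H)) {n : ℕ} (A : Matrix (Fin n) (Fin n) (BH H)) : ℝ :=
  ⨅ B : Matrix (Fin n) (Fin n) J, matNorm (A + B.map fun b => (b : BH H))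

/-- The scalar-level quotient (semi)norm modulo a subset `J ⊆ B(H)`. -/
def qnorm1 (J : Set (BH H)) (a : BH H) : ℝ := ⨅ b : J, ‖a + (b : BH H)‖

/-- A self-adjoint subspace. -/
def StarClosed (I : Submodule ℂ (BH H)) : Prop := ∀ a ∈ I, star a ∈ I

/-- A completely contractive map defined on a subspace `X ⊆ B(H)` with values in `B(K)`. -/
def CCmap (X : Submodule ℂ (BH H)) (φ : X →ₗ[ℂ] BH K) : Prop :=
  ∀ (n : ℕ) (A : Matrix (Fin n) (Fin n) X),
    matNorm (A.map fun x => φ x) ≤ matNorm (A.map fun x => (x : BH H))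

/-- A completely isometric map defined on a subspace `X ⊆ B(H)` with values in `B(K)`. -/
def CImap (X : Submodule ℂ (BH H)) (φ : X →ₗ[ℂ] BH K) : Prop :=
  ∀ (n : ℕ) (A : Matrix (Fin n) (Fin n) X),
    matNorm (A.map fun x => φ x) = matNorm (A.map fun x => (x : BH H))

/-- A completely contractive map defined on all of `B(H)`. -/
def CCfull (φ : BH H →ₗ[ℂ] BH K) : Prop :=
  ∀ (n : ℕ) (A : Matrix (Fin n) (Fin n) (BH H)),
    matNorm (A.map fun a => φ a) ≤ matNorm A

/-- A completely positive map defined on all of `B(H)`. -/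
def CPfull (φ : BH H →ₗ[ℂ] BH H) : Prop :=
  ∀ (n : ℕ) (A : Matrix (Fin n) (Fin n) (BH H)),
    IsPosOp (amp A) → IsPosOp (amp (A.map fun a => φ a))

/-- A completely positive map defined on an operator (sub)system `S ⊆ B(H)`. -/
def CPmap (S : Submodule ℂ (BH H)) (φ : S →ₗ[ℂ] BH K) : Prop :=
  ∀ (n : ℕ) (A : Matrix (Fin n) (Fin n) S),
    IsPosOp (amp (A.map fun s => (s : BH H))) → IsPosOp (amp (A.map fun s => φ s))

/-- `J ⊆ B(K)` is boundary for `X` (embedded in `B(K)` via `j`) if the quotient map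
by `J` is completely isometric on (the copy of) `X`. -/
def IsBoundarySet (X : Submodule ℂ (BH H)) (j : X →ₗ[ℂ] BH K) (J : Set (BH K)) : Prop :=
  ∀ (n : ℕ) (A : Matrix (Fin n) (Fin n) X),
    qnorm J (A.map fun x => j x) = matNorm (A.map fun x => (x : BH H))

/-- A boundary subsystem for `X` in `B(H)`: a self-adjoint subspace on which the
quotient map is completely isometric on `X`. -/
def IsBoundary (X I : Submodule ℂ (BH H)) : Prop :=
  StarClosed I ∧ IsBoundarySet X X.subtype (I : Set (BH H))

/-- A maximal boundary subsystem for `X` in `B(H)`. -/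
def IsMaximalBoundary (X I : Submodule ℂ (BH H)) : Prop :=
  IsBoundary X I ∧ ∀ J : Submodule ℂ (BH H), IsBoundary X J → I ≤ J → J = I

/-- Complete contractivity for a linear self-map of the quotient operator space `B(H)/I`
(expressed via arbitrary representatives, as `qnorm` only depends on the classes). -/
def CCQuotEndo (I : Submodule ℂ (BH H)) (φ : (BH H ⧸ I) →ₗ[ℂ] BH H ⧸ I) : Prop :=
  ∀ (n : ℕ) (A B : Matrix (Fin n) (Fin n) (BH H)),
    (∀ i j, φ (I.mkQ (A i j)) = I.mkQ (B i j)) →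
      qnorm (I : Set (BH H)) B ≤ qnorm (I : Set (BH H)) A

/-- Complete contractivity for a linear map from a subspace `Z ⊆ B(K)` into the
quotient operator space `B(H)/I`. -/
def CCToQuot (Z : Submodule ℂ (BH K)) (I : Submodule ℂ (BH H))
    (φ : Z →ₗ[ℂ] BH H ⧸ I) : Prop :=
  ∀ (n : ℕ) (A : Matrix (Fin n) (Fin n) Z) (B : Matrix (Fin n) (Fin n) (BH H)),
    (∀ i j, I.mkQ (B i j) = φ (A i j)) →
      qnorm (I : Set (BH H)) B ≤ matNorm (A.map fun z => (z : BH K))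

/-- Injectivity of a (unital) operator space `S ⊆ B(H)` in the category of operator
spaces with unital completely contractive maps. -/
def Injective (S : Submodule ℂ (BH H)) : Prop :=
  ∀ (K : Type) [NormedAddCommGroup K] [InnerProductSpace ℂ K] [CompleteSpace K],
    ∀ (Z Y : Submodule ℂ (BH K)) (hZY : Z ≤ Y) (h1Z : (1 : BH K) ∈ Z)
      (φ : Z →ₗ[ℂ] BH H), (∀ z, φ z ∈ S) → CCmap Z φ → φ ⟨1, h1Z⟩ = 1 →
      ∃ ψ : Y →ₗ[ℂ] BH H, (∀ y, ψ y ∈ S) ∧ CCmap Y ψ ∧ ψ ⟨1, hZY h1Z⟩ = 1 ∧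
        ∀ z : Z, ψ (Submodule.inclusion hZY z) = φ z

/-- `(S, ι)` is an injective envelope of the unital operator space `X`:
a unital completely isometric extension which is injective and rigid. -/
structure IsInjEnvelope (X : Submodule ℂ (BH H)) (S : Submodule ℂ (BH K))
    (ι : X →ₗ[ℂ] BH K) : Prop where
  mem : ∀ x, ι x ∈ S
  one : (1 : BH K) ∈ S
  unital : ∀ h1 : (1 : BH H) ∈ X, ι ⟨1, h1⟩ = 1
  ci : CImap X ι
  inj : Injective S
  rigid : ∀ φ : S →ₗ[ℂ] BH K, (∀ s, φ s ∈ S) → CCmap S φ →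
    (∀ x : X, φ ⟨ι x, mem x⟩ = ι x) → ∀ s : S, φ s = (s : BH K)

/-- A (closed, two-sided) ideal of the C*-subalgebra `C ⊆ B(K)`, described as a subset. -/
def IsIdealSet (C : StarSubalgebra ℂ (BH K)) (J : Set (BH K)) : Prop :=
  J ⊆ (C : Set (BH K)) ∧ (0 : BH K) ∈ J ∧
    (∀ a ∈ J, ∀ b ∈ J, a + b ∈ J) ∧ (∀ (c : ℂ), ∀ a ∈ J, c • a ∈ J) ∧
    (∀ c ∈ C, ∀ a ∈ J, c * a ∈ J ∧ a * c ∈ J) ∧ IsClosed J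

/-- A boundary ideal for `X` (embedded via `j`) in the C*-cover `C`. -/
def IsBdryIdeal (X : Submodule ℂ (BH H)) (j : X →ₗ[ℂ] BH K)
    (C : StarSubalgebra ℂ (BH K)) (J : Set (BH K)) : Prop :=
  IsIdealSet C J ∧ IsBoundarySet X j J

/-- `(C, j)` is a C*-cover of the unital operator space `X`. -/
structure IsCstarCover (X : Submodule ℂ (BH H)) (C : StarSubalgebra ℂ (BH K))
    (j : X →ₗ[ℂ] BH K) : Prop where
  mem : ∀ x, j x ∈ C
  unital : ∀ h1 : (1 : BH H) ∈ X, j ⟨1, h1⟩ = 1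
  ci : CImap X j
  gen : C = (StarAlgebra.adjoin ℂ (Set.range fun x : X => j x)).topologicalClosure

end Defs

/-!
The Cesàro averages `m_k = (1 + φ + ⋯ + φ^(k-1)) / k` are contractions fixing `X` pointwise,
and `m_k (φ y - y) = (φ^k y - y) / k → 0`. Since `λ (φ h - h) = φ (λ h) - λ h`, the averages of
`x + λ (φ h - h)` converge to `x`, so `‖x‖ ≤ ‖x + λ (φ h - h)‖`.
-/

open Filter Topology

section BirkhoffAverage

variable {E : Type*} [NormedAddCommGroup E]

theorem norm_iterate_le_of_forall_norm_map_le {T : E → E} (hT : ∀ v, ‖T v‖ ≤ ‖v‖) (k : ℕ)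
    (v : E) : ‖T^[k] v‖ ≤ ‖v‖ := by
  induction k with
  | zero => rfl
  | succ k ih =>
    rw [Function.iterate_succ_apply']
    exact (hT _).trans ih

variable [NormedSpace ℝ E]

theorem AddMonoidHom.birkhoffAverage_id_add (T : E →+ E) (n : ℕ) (u v : E) :
    birkhoffAverage ℝ T _root_.id n (u + v) =
      birkhoffAverage ℝ T _root_.id n u + birkhoffAverage ℝ T _root_.id n v := by
  simp [birkhoffAverage, birkhoffSum, iterate_map_add, Finset.sum_add_distrib]

theorem AddMonoidHom.birkhoffAverage_id_sub (T : E →+ E) (n : ℕ) (u v : E) :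
    birkhoffAverage ℝ T _root_.id n (u - v) =
      birkhoffAverage ℝ T _root_.id n u - birkhoffAverage ℝ T _root_.id n v := by
  simp [birkhoffAverage, birkhoffSum, iterate_map_sub, Finset.sum_sub_distrib, smul_sub]

theorem norm_birkhoffAverage_id_le {T : E → E} (hT : ∀ v, ‖T v‖ ≤ ‖v‖) (n : ℕ) (v : E) :
    ‖birkhoffAverage ℝ T id n v‖ ≤ ‖v‖ := by
  rcases eq_or_ne n 0 with rfl | hn
  · simp
  calc ‖birkhoffAverage ℝ T id n v‖
      ≤ (n : ℝ)⁻¹ * ∑ k ∈ Finset.range n, ‖T^[k] v‖ := by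
        rw [birkhoffAverage, norm_smul, norm_inv, Real.norm_natCast]
        gcongr
        exact norm_sum_le _ _
    _ ≤ (n : ℝ)⁻¹ * (n * ‖v‖) := by
        gcongr
        refine (Finset.sum_le_sum fun k _ ↦ norm_iterate_le_of_forall_norm_map_le hT k v).trans_eq ?_
        simp
    _ = ‖v‖ := by field_simp

theorem tendsto_birkhoffAverage_id_apply_sub {T : E → E} (hT : ∀ v, ‖T v‖ ≤ ‖v‖) (y : E) :
    Tendsto (fun n ↦ birkhoffAverage ℝ T id n (T y) - birkhoffAverage ℝ T id n y) atTop
      (𝓝 0) :=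
  tendsto_birkhoffAverage_apply_sub_birkhoffAverage ℝ <| isBounded_iff_forall_norm_le.2
    ⟨‖y‖, Set.forall_mem_range.2 (norm_iterate_le_of_forall_norm_map_le hT · y)⟩

theorem AddMonoidHom.norm_le_norm_add_map_sub_of_isFixedPt (T : E →+ E)
    (hT : ∀ v, ‖T v‖ ≤ ‖v‖) {x : E} (hx : Function.IsFixedPt T x) (y : E) :
    ‖x‖ ≤ ‖x + (T y - y)‖ := by
  set A := birkhoffAverage ℝ T _root_.id
  have hA : ∀ᶠ n in atTop, x + (A n (T y) - A n y) = A n (x + (T y - y)) := by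
    filter_upwards [eventually_ne_atTop 0] with n hn
    simp only [A]
    rw [T.birkhoffAverage_id_add, T.birkhoffAverage_id_sub,
      hx.birkhoffAverage_eq ℝ _root_.id (Nat.cast_ne_zero.2 hn), _root_.id]
  have hlim : Tendsto (fun n ↦ A n (x + (T y - y))) atTop (𝓝 x) := by
    simpa using (tendsto_const_nhds.add (tendsto_birkhoffAverage_id_apply_sub hT y)).congr' hA
  exact le_of_tendsto' hlim.norm fun n ↦ norm_birkhoffAverage_id_le hT n _

end BirkhoffAverage

section OperatorNorms

variable {H K : Type} [NormedAddCommGroup H] [InnerProductSpace ℂ H]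
  [NormedAddCommGroup K] [InnerProductSpace ℂ K]

theorem matNorm_fin_one (M : Matrix (Fin 1) (Fin 1) (BH H)) : matNorm M = ‖M 0 0‖ := by
  let e : (PiLp 2 fun _ : Fin 1 => H) ≃ₗᵢ[ℂ] H :=
    { PiLp.equivOfUnique 2 ℂ (fun _ : Fin 1 => H) with
      norm_map' := fun v => by simp [PiLp.norm_eq_of_L2] }
  have : amp M = (e.symm : H →L[ℂ] _).comp ((M 0 0).comp (e : _ →L[ℂ] H)) := by
    ext v i
    fin_cases i
    simp [amp, e, ContinuousLinearMap.pi]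
    rfl
  rw [matNorm, this, ContinuousLinearMap.opNorm_linearIsometryEquiv_comp,
    ContinuousLinearMap.opNorm_comp_linearIsometryEquiv]

theorem CCmap.norm_map_le {X : Submodule ℂ (BH H)} {φ : X →ₗ[ℂ] BH K} (hφ : CCmap X φ)
    (x : X) : ‖φ x‖ ≤ ‖x‖ := by
  simpa [matNorm_fin_one] using hφ 1 (.of fun _ _ ↦ x)

theorem qnorm1_eq_norm_of_forall_norm_le_norm_add {J : Set (BH H)} (hJ : (0 : BH H) ∈ J)
    {a : BH H} (ha : ∀ b ∈ J, ‖a‖ ≤ ‖a + b‖) : qnorm1 J a = ‖a‖ := by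
  have : Nonempty J := ⟨⟨0, hJ⟩⟩
  exact le_antisymm
    ((ciInf_le ⟨0, Set.forall_mem_range.2 fun _ ↦ norm_nonneg _⟩ ⟨0, hJ⟩).trans_eq (by simp))
    (le_ciInf fun b ↦ ha b b.2)

end OperatorNorms

theorem norm_ge_of_ucc_fixing_general {H : Type} [NormedAddCommGroup H] [InnerProductSpace ℂ H]
    (X S : Submodule ℂ (BH H)) (hXS : X ≤ S)
    (φ : S →ₗ[ℂ] S)
    (hcc : CCmap S (S.subtype ∘ₗ φ))
    (hfix : ∀ s : S, (s : BH H) ∈ X → φ s = s)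
    (h : S) :
    ∀ x ∈ X, (∀ lam : ℂ, ‖x‖ ≤ ‖x + lam • ((φ h - h : S) : BH H)‖) ∧
      qnorm1 ((Submodule.span ℂ {((φ h - h : S) : BH H)} : Submodule ℂ (BH H)) : Set (BH H)) x
        = ‖x‖ := by
  have hφ : ∀ s, ‖φ s‖ ≤ ‖s‖ := hcc.norm_map_le
  intro x hx
  have key : ∀ lam : ℂ, ‖x‖ ≤ ‖x + lam • ((φ h - h : S) : BH H)‖ := fun lam ↦ by
    simpa [smul_sub] using
      φ.toAddMonoidHom.norm_le_norm_add_map_sub_of_isFixedPt hφ (hfix ⟨x, hXS hx⟩ hx) (lam • h)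
  refine ⟨key, qnorm1_eq_norm_of_forall_norm_le_norm_add (Submodule.zero_mem _) ?_⟩
  rintro _ hb
  obtain ⟨lam, rfl⟩ := Submodule.mem_span_singleton.1 hb
  exact key lam

/-- if `φ` is a ucc self-map of an operator system `S` fixing `X` pointwise
and `h ∈ S` is self-adjoint, then `span{φ(h) − h}` is a boundary subspace at level 1. -/
theorem norm_ge_of_ucc_fixing {H : Type} [NormedAddCommGroup H] [InnerProductSpace ℂ H]
    [CompleteSpace H] (X S : Submodule ℂ (BH H)) (hXS : X ≤ S)
    (h1X : (1 : BH H) ∈ X) (hSsa : StarClosed S)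
    (φ : S →ₗ[ℂ] S) (hu : φ ⟨1, hXS h1X⟩ = ⟨1, hXS h1X⟩)
    (hcc : CCmap S (S.subtype ∘ₗ φ))
    (hfix : ∀ s : S, (s : BH H) ∈ X → φ s = s)
    (h : S) (hh : IsSelfAdjoint (h : BH H)) :
    ∀ x ∈ X, (∀ lam : ℂ, ‖x‖ ≤ ‖x + lam • ((φ h - h : S) : BH H)‖) ∧
      qnorm1 ((Submodule.span ℂ {((φ h - h : S) : BH H)} : Submodule ℂ (BH H)) : Set (BH H)) x
        = ‖x‖ :=
  norm_ge_of_ucc_fixing_general X S hXS φ hcc hfix h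
end
end

section
/- Let X ⊆ B(H) be a unital operator space and let {I_k} be a chain (totally ordered family under inclusion) of boundary subsystems for X in B(H). Then the closed linear span J of the union ∪_k I_k is a boundary subsystem for X: for every ν and every [x_{ij}] ∈ M_ν(X), ‖[x_{ij}] + M_ν(J)‖ = ‖[x_{ij}]‖. Consequently, by Zorn's lemma, a maximal boundary subsystem for X in B(H) exists. -/
set_option synthInstance.maxHeartbeats 1000000
set_option maxHeartbeats 1000000

noncomputable section

open scoped ComplexOrder

/-! Since `0 ∈ J`, `J` is boundary for `X` exactly when `‖[x i j]‖ ≤ ‖[x i j + y i j]‖` for all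
matrices `[y i j]` over `J`. This condition is closed in `[y i j]`, so it passes from `J` to its
closure; and a matrix over a directed union of subspaces has its finitely many entries in a single
member, so it passes to directed unions. Hence upper bounds of chains exist, and Zorn's lemma
gives maximal boundary subsystems. -/

section BoundarySubsystems

variable {H : Type} [NormedAddCommGroup H] [InnerProductSpace ℂ H] [CompleteSpace H]

theorem continuous_matNorm (n : ℕ) :
    Continuous (matNorm : Matrix (Fin n) (Fin n) (BH H) → ℝ) := by
  unfold matNorm amp
  fun_prop

theorem qnorm_le_matNorm {J : Set (BH H)} (h0 : (0 : BH H) ∈ J) {n : ℕ}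
    (A : Matrix (Fin n) (Fin n) (BH H)) : qnorm J A ≤ matNorm A :=
  ciInf_le_of_le ⟨0, by rintro _ ⟨B, rfl⟩; exact norm_nonneg _⟩ (Matrix.of fun _ _ => ⟨0, h0⟩)
    (le_of_eq (by congr 1; ext; simp))

theorem le_qnorm_iff {J : Set (BH H)} (hJ : J.Nonempty) {n : ℕ}
    (A : Matrix (Fin n) (Fin n) (BH H)) (r : ℝ) :
    r ≤ qnorm J A ↔ ∀ B : Matrix (Fin n) (Fin n) (BH H), (∀ i j, B i j ∈ J) →
      r ≤ matNorm (A + B) := by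
  have : Nonempty (Matrix (Fin n) (Fin n) J) := ⟨Matrix.of fun _ _ => ⟨_, hJ.some_mem⟩⟩
  rw [qnorm, le_ciInf_iff ⟨0, by rintro _ ⟨B, rfl⟩; exact norm_nonneg _⟩]
  exact ⟨fun h B hB => h (Matrix.of fun i j => ⟨B i j, hB i j⟩),
    fun h B => h _ fun i j => (B i j).2⟩

theorem isBoundarySet_subtype_iff {X : Submodule ℂ (BH H)} {J : Set (BH H)}
    (h0 : (0 : BH H) ∈ J) :
    IsBoundarySet X X.subtype J ↔ ∀ (n : ℕ) (A : Matrix (Fin n) (Fin n) X)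
      (B : Matrix (Fin n) (Fin n) (BH H)), (∀ i j, B i j ∈ J) →
        matNorm (A.map fun x => (x : BH H)) ≤ matNorm ((A.map fun x => (x : BH H)) + B) := by
  refine forall₂_congr fun n A => ?_
  change qnorm J (A.map fun x => (x : BH H)) = _ ↔ _
  rw [le_antisymm_iff, and_iff_right (qnorm_le_matNorm h0 _), le_qnorm_iff ⟨0, h0⟩]

theorem IsBoundarySet.closure {X : Submodule ℂ (BH H)} {J : Set (BH H)}
    (h0 : (0 : BH H) ∈ J) (hJ : IsBoundarySet X X.subtype J) :
    IsBoundarySet X X.subtype (closure J) := by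
  rw [isBoundarySet_subtype_iff (subset_closure h0)]
  rw [isBoundarySet_subtype_iff h0] at hJ
  intro n A B hB
  have hclosed : IsClosed {B : Matrix (Fin n) (Fin n) (BH H) |
      matNorm (A.map fun x => (x : BH H)) ≤ matNorm ((A.map fun x => (x : BH H)) + B)} :=
    isClosed_le continuous_const ((continuous_matNorm n).comp (continuous_const_add _))
  have hdense : B ∈ _root_.closure (Set.univ.pi fun _ => Set.univ.pi fun _ => J) := by
    simp only [closure_pi_set]
    exact fun i _ j _ => hB i j
  exact hclosed.closure_subset_iff.2 (fun B' hB' =>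
    hJ n A B' fun i j => Set.mem_univ_pi.1 (Set.mem_univ_pi.1 hB' i) j)
    hdense

theorem isBoundarySet_iSup_of_directed {X : Submodule ℂ (BH H)} {ι : Sort*} [Nonempty ι]
    {I : ι → Submodule ℂ (BH H)} (hdir : Directed (· ≤ ·) I)
    (hbd : ∀ k, IsBoundarySet X X.subtype (I k)) :
    IsBoundarySet X X.subtype (⨆ k, I k : Submodule ℂ (BH H)) := by
  rw [isBoundarySet_subtype_iff (Submodule.zero_mem _)]
  intro n A B hB
  choose k hk using fun p : Fin n × Fin n =>
    (Submodule.mem_iSup_of_directed I hdir).1 (hB p.1 p.2)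
  obtain ⟨m, hm⟩ := hdir.finite_le k
  exact (isBoundarySet_subtype_iff (Submodule.zero_mem _)).1 (hbd m) n A B
    fun i j => hm (i, j) (hk (i, j))

theorem StarClosed.iSup {ι : Sort*} {I : ι → Submodule ℂ (BH H)} (hI : ∀ k, StarClosed (I k)) :
    StarClosed (⨆ k, I k) := fun _ ha =>
  Submodule.iSup_induction I (motive := fun a => star a ∈ ⨆ k, I k) ha
    (fun k x hx => Submodule.mem_iSup_of_mem k (hI k x hx)) (by simp)
    (fun x y hx hy => by simpa using add_mem hx hy)

theorem StarClosed.topologicalClosure {I : Submodule ℂ (BH H)} (hI : StarClosed I) :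
    StarClosed I.topologicalClosure := fun _ ha =>
  map_mem_closure continuous_star ha hI

theorem IsBoundary.topologicalClosure {X I : Submodule ℂ (BH H)} (h : IsBoundary X I) :
    IsBoundary X I.topologicalClosure :=
  ⟨h.1.topologicalClosure, by
    rw [Submodule.topologicalClosure_coe]; exact h.2.closure I.zero_mem⟩

theorem IsBoundary.iSup_of_directed {X : Submodule ℂ (BH H)} {ι : Sort*} [Nonempty ι]
    {I : ι → Submodule ℂ (BH H)} (hdir : Directed (· ≤ ·) I) (hbd : ∀ k, IsBoundary X (I k)) :
    IsBoundary X (⨆ k, I k) :=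
  ⟨StarClosed.iSup fun k => (hbd k).1, isBoundarySet_iSup_of_directed hdir fun k => (hbd k).2⟩

theorem IsBoundary.exists_le_maximal {X I : Submodule ℂ (BH H)} (hI : IsBoundary X I) :
    ∃ M, I ≤ M ∧ IsMaximalBoundary X M := by
  obtain ⟨M, hIM, hM⟩ := zorn_le_nonempty₀ {J | IsBoundary X J} (fun c hc hchain J hJ => by
    have : Nonempty c := ⟨⟨J, hJ⟩⟩
    exact ⟨⨆ K : c, (K : Submodule ℂ (BH H)),
      IsBoundary.iSup_of_directed (directedOn_iff_directed.1 hchain.directedOn) fun K => hc K.2,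
      fun K hK => le_iSup (fun K : c => (K : Submodule ℂ (BH H))) ⟨K, hK⟩⟩) I hI
  exact ⟨M, hIM, hM.1, fun J hJ hMJ => le_antisymm (hM.2 hJ hMJ) hMJ⟩

end BoundarySubsystems

theorem chain_boundary_and_maximal_exists_general {H : Type} [NormedAddCommGroup H]
    [InnerProductSpace ℂ H] [CompleteSpace H] (X : Submodule ℂ (BH H))
    {ι : Type} [Nonempty ι] (I : ι → Submodule ℂ (BH H))
    (hchain : IsChain (· ≤ ·) (Set.range I)) (hbd : ∀ k, IsBoundary X (I k)) :
    IsBoundary X (⨆ k, I k).topologicalClosure ∧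
      ∃ M : Submodule ℂ (BH H), IsBoundary X M ∧
        ∀ J : Submodule ℂ (BH H), IsBoundary X J → M ≤ J → J = M := by
  have hsup : IsBoundary X (⨆ k, I k) :=
    .iSup_of_directed (directedOn_range.1 hchain.directedOn) hbd
  obtain ⟨M, -, hM⟩ := hsup.exists_le_maximal
  exact ⟨hsup.topologicalClosure, M, hM⟩

/-- the closed linear span of a chain of boundary subsystems is a boundary
subsystem; consequently maximal boundary subsystems exist. -/
theorem chain_boundary_and_maximal_exists {H : Type} [NormedAddCommGroup H]
    [InnerProductSpace ℂ H] [CompleteSpace H] (X : Submodule ℂ (BH H))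
    (h1X : (1 : BH H) ∈ X) {ι : Type} [Nonempty ι] (I : ι → Submodule ℂ (BH H))
    (hchain : IsChain (· ≤ ·) (Set.range I)) (hbd : ∀ k, IsBoundary X (I k)) :
    IsBoundary X (⨆ k, I k).topologicalClosure ∧
      ∃ M : Submodule ℂ (BH H), IsBoundary X M ∧
        ∀ J : Submodule ℂ (BH H), IsBoundary X J → M ≤ J → J = M :=
  chain_boundary_and_maximal_exists_general X I hchain hbd
end
end

section
/- Let (S₁, ι₁) and (S₂, ι₂) be two injective envelopes of a unital operator space X. Then there exists a unique unital completely isometric surjection φ: S₁ → S₂ with φ(ι₁(x)) = ι₂(x) for all x ∈ X. -/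
set_option synthInstance.maxHeartbeats 1000000
set_option maxHeartbeats 1000000

noncomputable section

open scoped ComplexOrder

/-!
Injectivity of `S₂` extends `ι₁ x ↦ ι₂ x` from `ι₁(X)` to a unital completely contractive
`Φ : S₁ → S₂`, and symmetrically gives `Ψ : S₂ → S₁`. Rigidity forces `Ψ ∘ Φ` and `Φ ∘ Ψ` to be
identities, so `Φ` is a complete isometry onto `S₂`. Any other such `φ` also satisfies
`Ψ ∘ φ = id`, whence `φ = Φ ∘ Ψ ∘ φ = Φ`.
-/

section
variable {H K L M : Type}
variable [NormedAddCommGroup H] [InnerProductSpace ℂ H]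
variable [NormedAddCommGroup K] [InnerProductSpace ℂ K]
variable [NormedAddCommGroup L] [InnerProductSpace ℂ L]
variable [NormedAddCommGroup M] [InnerProductSpace ℂ M]

lemma matNorm_zero {n : ℕ} : matNorm (0 : Matrix (Fin n) (Fin n) (BH H)) = 0 := by
  simpa [matNorm, amp] using ContinuousLinearMap.opNorm_zero

lemma eq_zero_of_matNorm_eq_zero {y : BH H}
    (h : matNorm (Matrix.of fun _ _ => y : Matrix (Fin 1) (Fin 1) (BH H)) = 0) : y = 0 := by
  have h0 : amp (Matrix.of fun _ _ => y : Matrix (Fin 1) (Fin 1) (BH H)) = 0 :=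
    (ContinuousLinearMap.opNorm_zero_iff _).mp h
  ext w
  simpa [amp] using congr($h0 (WithLp.toLp 2 fun _ => w) 0)

lemma CImap.injective {X : Submodule ℂ (BH H)} {j : X →ₗ[ℂ] BH K} (hj : CImap X j) :
    Function.Injective j := by
  refine (injective_iff_map_eq_zero j).mpr fun x hx =>
    Subtype.ext (eq_zero_of_matNorm_eq_zero ?_)
  have h := hj 1 (Matrix.of fun _ _ => x)
  have hzero : (Matrix.of fun _ _ => x : Matrix (Fin 1) (Fin 1) X).map j = 0 := by
    ext; simp [hx]
  rw [hzero, matNorm_zero] at h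
  exact h.symm

lemma CImap.ccmap {X : Submodule ℂ (BH H)} {j : X →ₗ[ℂ] BH K} (hj : CImap X j) : CCmap X j :=
  fun n A => (hj n A).le

lemma CCmap.comp {S : Submodule ℂ (BH H)} {T : Submodule ℂ (BH K)} {φ : S →ₗ[ℂ] BH K}
    {ψ : T →ₗ[ℂ] BH L} (hψ : CCmap T ψ) (hφ : CCmap S φ) (hφT : ∀ s, φ s ∈ T) :
    CCmap S (ψ ∘ₗ φ.codRestrict T hφT) :=
  fun n A => (hψ n (A.map (φ.codRestrict T hφT))).trans (hφ n A)

lemma CCmap.cimap_of_leftInverse {S : Submodule ℂ (BH H)} {T : Submodule ℂ (BH K)}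
    {φ : S →ₗ[ℂ] BH K} {ψ : T →ₗ[ℂ] BH H} (hφ : CCmap S φ) (hψ : CCmap T ψ)
    (hφT : ∀ s, φ s ∈ T) (hψφ : ∀ s, ψ ⟨φ s, hφT s⟩ = s) : CImap S φ := by
  intro n A
  refine le_antisymm (hφ n A) ?_
  have hA : (A.map fun s => (s : BH H)) = (A.map (φ.codRestrict T hφT)).map ψ := by
    funext i j; exact (hψφ (A i j)).symm
  rw [hA]
  exact hψ n _

variable {X : Submodule ℂ (BH H)}

/-- The map `ι₁ x ↦ ι₂ x` on the copy `ι₁(X)` of `X`. -/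
def transfer {ι₁ : X →ₗ[ℂ] BH K} (hι₁ : CImap X ι₁) (ι₂ : X →ₗ[ℂ] BH L) :
    LinearMap.range ι₁ →ₗ[ℂ] BH L :=
  ι₂ ∘ₗ (LinearEquiv.ofInjective ι₁ hι₁.injective).symm.toLinearMap

lemma transfer_apply {ι₁ : X →ₗ[ℂ] BH K} (hι₁ : CImap X ι₁) (ι₂ : X →ₗ[ℂ] BH L) (x : X) :
    transfer hι₁ ι₂ ⟨ι₁ x, LinearMap.mem_range_self ι₁ x⟩ = ι₂ x :=
  congrArg ι₂ ((LinearEquiv.ofInjective ι₁ hι₁.injective).symm_apply_apply x)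

lemma ccmap_transfer {ι₁ : X →ₗ[ℂ] BH K} (hι₁ : CImap X ι₁) {ι₂ : X →ₗ[ℂ] BH L}
    (hι₂ : CCmap X ι₂) : CCmap (LinearMap.range ι₁) (transfer hι₁ ι₂) := by
  intro n A
  have hA : (A.map fun z => (z : BH K))
      = (A.map (LinearEquiv.ofInjective ι₁ hι₁.injective).symm).map ι₁ := by
    funext i j
    exact (LinearEquiv.ofInjective_symm_apply ι₁ (h := hι₁.injective) (A i j)).symm
  rw [hA, hι₁ n]
  exact hι₂ n _

structure IsCCExtMap {S₁ : Submodule ℂ (BH K)} {ι₁ : X →ₗ[ℂ] BH K} (hι₁ : ∀ x, ι₁ x ∈ S₁)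
    (S₂ : Submodule ℂ (BH L)) (ι₂ : X →ₗ[ℂ] BH L) (Φ : S₁ →ₗ[ℂ] BH L) : Prop where
  mem : ∀ s, Φ s ∈ S₂
  cc : CCmap S₁ Φ
  map_ι : ∀ x, Φ ⟨ι₁ x, hι₁ x⟩ = ι₂ x

lemma IsCCExtMap.comp {S₁ : Submodule ℂ (BH K)} {ι₁ : X →ₗ[ℂ] BH K} {hι₁ : ∀ x, ι₁ x ∈ S₁}
    {S₂ : Submodule ℂ (BH L)} {ι₂ : X →ₗ[ℂ] BH L} {hι₂ : ∀ x, ι₂ x ∈ S₂}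
    {S₃ : Submodule ℂ (BH M)} {ι₃ : X →ₗ[ℂ] BH M} {Φ : S₁ →ₗ[ℂ] BH L} {Ψ : S₂ →ₗ[ℂ] BH M}
    (hΨ : IsCCExtMap hι₂ S₃ ι₃ Ψ) (hΦ : IsCCExtMap hι₁ S₂ ι₂ Φ) :
    IsCCExtMap hι₁ S₃ ι₃ (Ψ ∘ₗ Φ.codRestrict S₂ hΦ.mem) where
  mem _ := hΨ.mem _
  cc := hΨ.cc.comp hΦ.cc hΦ.mem
  map_ι x := by
    rw [LinearMap.comp_apply, ← hΨ.map_ι x]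
    exact congrArg Ψ (Subtype.ext (hΦ.map_ι x))

lemma IsInjEnvelope.eq_self_of_isCCExtMap {S : Submodule ℂ (BH K)} {ι : X →ₗ[ℂ] BH K}
    (e : IsInjEnvelope X S ι) {ρ : S →ₗ[ℂ] BH K} (hρ : IsCCExtMap e.mem S ι ρ) (s : S) :
    ρ s = s :=
  e.rigid ρ hρ.mem hρ.cc hρ.map_ι s

theorem Injective.exists_isCCExtMap [CompleteSpace K] (h1X : (1 : BH H) ∈ X)
    {S₁ : Submodule ℂ (BH K)} {ι₁ : X →ₗ[ℂ] BH K} (hι₁S : ∀ x, ι₁ x ∈ S₁) (hι₁ : CImap X ι₁)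
    (hι₁1 : ι₁ ⟨1, h1X⟩ = 1) {S₂ : Submodule ℂ (BH L)} (hS₂ : Injective S₂)
    {ι₂ : X →ₗ[ℂ] BH L} (hι₂S : ∀ x, ι₂ x ∈ S₂) (hι₂ : CCmap X ι₂) (hι₂1 : ι₂ ⟨1, h1X⟩ = 1) :
    ∃ Φ : S₁ →ₗ[ℂ] BH L, IsCCExtMap hι₁S S₂ ι₂ Φ := by
  have hrange : LinearMap.range ι₁ ≤ S₁ := by
    rintro _ ⟨x, rfl⟩
    exact hι₁S x
  have h1range : (1 : BH K) ∈ LinearMap.range ι₁ := ⟨⟨1, h1X⟩, hι₁1⟩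
  have hunital : transfer hι₁ ι₂ ⟨1, h1range⟩ = 1 := by
    simpa only [← hι₁1, transfer_apply] using hι₂1
  obtain ⟨Φ, hΦS, hΦ, -, hΦι⟩ := hS₂ K (LinearMap.range ι₁) S₁ hrange h1range
    (transfer hι₁ ι₂) (fun _ => hι₂S _) (ccmap_transfer hι₁ hι₂) hunital
  exact ⟨Φ, ⟨hΦS, hΦ, fun x =>
    (hΦι ⟨ι₁ x, LinearMap.mem_range_self ι₁ x⟩).trans (transfer_apply hι₁ ι₂ x)⟩⟩

end

theorem injective_envelope_unique_general {H H₁ H₂ : Type}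
    [NormedAddCommGroup H] [InnerProductSpace ℂ H]
    [NormedAddCommGroup H₁] [InnerProductSpace ℂ H₁] [CompleteSpace H₁]
    [NormedAddCommGroup H₂] [InnerProductSpace ℂ H₂] [CompleteSpace H₂]
    (X : Submodule ℂ (BH H)) (h1X : (1 : BH H) ∈ X)
    (S₁ : Submodule ℂ (BH H₁)) (ι₁ : X →ₗ[ℂ] BH H₁)
    (S₂ : Submodule ℂ (BH H₂)) (ι₂ : X →ₗ[ℂ] BH H₂)
    (e₁ : IsInjEnvelope X S₁ ι₁) (e₂ : IsInjEnvelope X S₂ ι₂) :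
    ∃! φ : S₁ →ₗ[ℂ] BH H₂, (∀ s, φ s ∈ S₂) ∧ CImap S₁ φ ∧
      (∀ t ∈ S₂, ∃ s : S₁, φ s = t) ∧ φ ⟨1, e₁.one⟩ = 1 ∧
      ∀ x : X, φ ⟨ι₁ x, e₁.mem x⟩ = ι₂ x := by
  obtain ⟨Φ, hΦ⟩ := e₂.inj.exists_isCCExtMap h1X e₁.mem e₁.ci (e₁.unital h1X) e₂.mem
    e₂.ci.ccmap (e₂.unital h1X)
  obtain ⟨Ψ, hΨ⟩ := e₁.inj.exists_isCCExtMap h1X e₂.mem e₂.ci (e₂.unital h1X) e₁.mem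
    e₁.ci.ccmap (e₁.unital h1X)
  have hΨΦ : ∀ s, Ψ ⟨Φ s, hΦ.mem s⟩ = s := e₁.eq_self_of_isCCExtMap (hΨ.comp hΦ)
  have hΦΨ : ∀ t, Φ ⟨Ψ t, hΨ.mem t⟩ = t := e₂.eq_self_of_isCCExtMap (hΦ.comp hΨ)
  refine ⟨Φ, ⟨hΦ.mem, hΦ.cc.cimap_of_leftInverse hΨ.cc hΦ.mem hΨΦ,
    fun t ht => ⟨_, hΦΨ ⟨t, ht⟩⟩, ?_, hΦ.map_ι⟩, ?_⟩
  · simpa only [e₁.unital h1X, e₂.unital h1X] using hΦ.map_ι ⟨1, h1X⟩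
  · rintro φ ⟨hφS, hφ, -, -, hφι⟩
    have hΨφ := e₁.eq_self_of_isCCExtMap (hΨ.comp ⟨hφS, hφ.ccmap, hφι⟩)
    ext s : 1
    calc φ s = Φ ⟨Ψ ⟨φ s, hφS s⟩, hΨ.mem _⟩ := (hΦΨ ⟨φ s, hφS s⟩).symm
      _ = Φ s := congrArg Φ (Subtype.ext (hΨφ s))

/-- uniqueness of the injective envelope: between two injective envelopes of
`X` there is a unique unital completely isometric surjection fixing (the copies of) `X`. -/
theorem injective_envelope_unique {H H₁ H₂ : Type}
    [NormedAddCommGroup H] [InnerProductSpace ℂ H] [CompleteSpace H]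
    [NormedAddCommGroup H₁] [InnerProductSpace ℂ H₁] [CompleteSpace H₁]
    [NormedAddCommGroup H₂] [InnerProductSpace ℂ H₂] [CompleteSpace H₂]
    (X : Submodule ℂ (BH H)) (h1X : (1 : BH H) ∈ X)
    (S₁ : Submodule ℂ (BH H₁)) (ι₁ : X →ₗ[ℂ] BH H₁)
    (S₂ : Submodule ℂ (BH H₂)) (ι₂ : X →ₗ[ℂ] BH H₂)
    (e₁ : IsInjEnvelope X S₁ ι₁) (e₂ : IsInjEnvelope X S₂ ι₂) :
    ∃! φ : S₁ →ₗ[ℂ] BH H₂, (∀ s, φ s ∈ S₂) ∧ CImap S₁ φ ∧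
      (∀ t ∈ S₂, ∃ s : S₁, φ s = t) ∧ φ ⟨1, e₁.one⟩ = 1 ∧
      ∀ x : X, φ ⟨ι₁ x, e₁.mem x⟩ = ι₂ x :=
  injective_envelope_unique_general X h1X S₁ ι₁ S₂ ι₂ e₁ e₂
end
end

section
/- Let X ⊆ B(H) be a unital operator space with injective envelope S ⊆ B(H) (with ι = id_X), and let φ: B(H) → S be a ucp projection onto S fixing X. Define on B(H)/ker φ the product (a + ker φ) ⊙ (b + ker φ) := φ(a)φ(b) + ker φ. Then this product is well defined and the quotient norm satisfies the C*-identity: ‖(a + ker φ)* ⊙ (a + ker φ)‖ = ‖a + ker φ‖² for all a ∈ B(H). -/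
set_option synthInstance.maxHeartbeats 1000000
set_option maxHeartbeats 1000000

noncomputable section

open scoped ComplexOrder

/-! Applying a unital completely positive map `φ` to the positive block matrix
`[[1, b], [b⋆, b⋆ b]]` and testing the image on vectors `(-(φ b) v, v)` gives the Kadison–Schwarz
inequality `‖φ b‖² ≤ ‖φ (b⋆ b)‖`; together with `‖φ p‖ ≤ ‖p‖` for `p ≥ 0` it makes `φ` contractive.
Since `φ² = φ`, the infimum defining the norm of `a + ker φ` is then attained at the
representative `φ a`, so that norm is `‖φ a‖`. For `s = φ a` the C⋆-identity becomes
`‖φ (s⋆ s)‖ = ‖s‖²`: `≤` is the C⋆-identity of `B(H)`, `≥` is Kadison–Schwarz with `φ s = s`. -/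

open scoped InnerProductSpace ComplexOrder ComplexStarModule

theorem LinearMap.map_star_of_map_isSelfAdjoint {A B : Type*} [AddCommGroup A] [Module ℂ A]
    [StarAddMonoid A] [StarModule ℂ A] [AddCommGroup B] [Module ℂ B] [StarAddMonoid B]
    [StarModule ℂ B] (f : A →ₗ[ℂ] B) (hf : ∀ a, IsSelfAdjoint a → IsSelfAdjoint (f a)) (a : A) :
    f (star a) = star (f a) := by
  have hre := hf _ (ℜ a).2
  have him := hf _ (ℑ a).2
  conv_lhs => rw [← realPart_add_I_smul_imaginaryPart a]
  conv_rhs => rw [← realPart_add_I_smul_imaginaryPart a]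
  simp [hre.star_eq, him.star_eq, (ℜ a).2.star_eq, (ℑ a).2.star_eq]

section Operators

variable {H : Type} [NormedAddCommGroup H] [InnerProductSpace ℂ H] {φ : BH H →ₗ[ℂ] BH H}

theorem isPosOp_iff_nonneg (T : BH H) : IsPosOp T ↔ 0 ≤ T := by
  rw [ContinuousLinearMap.nonneg_iff_isPositive, ContinuousLinearMap.isPositive_iff_complex]
  refine ⟨fun h x => ?_, fun h x => ?_⟩
  · have hx : 0 ≤ ⟪T x, x⟫_ℂ := by rw [← inner_conj_symm]; exact star_nonneg_iff.mpr (h x)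
    obtain ⟨hre, him⟩ := Complex.nonneg_iff.mp hx
    exact ⟨Complex.ext (by simp) (by simp [him]), hre⟩
  · rw [← inner_conj_symm, ← (h x).1]
    simpa using (h x).2

theorem amp_apply {n : ℕ} (A : Matrix (Fin n) (Fin n) (BH H)) (w : PiLp 2 fun _ : Fin n => H)
    (i : Fin n) : amp A w i = ∑ j, A i j (w j) := by
  simp [amp, WithLp.ofLp_sum, Pi.single_apply, apply_ite DFunLike.coe, ite_apply]

theorem inner_amp {n : ℕ} (A : Matrix (Fin n) (Fin n) (BH H)) (w : PiLp 2 fun _ : Fin n => H) :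
    ⟪w, amp A w⟫_ℂ = ∑ i, ∑ j, ⟪w i, A i j (w j)⟫_ℂ := by
  simp [PiLp.inner_apply, amp_apply, inner_sum]

theorem isPosOp_amp_one_iff (a : BH H) : IsPosOp (amp !![a]) ↔ IsPosOp a := by
  refine ⟨fun h v => ?_, fun h w => ?_⟩
  · simpa [inner_amp] using h (WithLp.toLp 2 ![v])
  · simpa [inner_amp] using h (w 0)

theorem CPfull.map_nonneg (hcp : CPfull φ) {a : BH H} (ha : 0 ≤ a) : 0 ≤ φ a := by
  rw [← isPosOp_iff_nonneg, ← isPosOp_amp_one_iff] at ha ⊢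
  convert hcp 1 _ ha using 2
  ext i j
  fin_cases i; fin_cases j; rfl

theorem qnorm1_ker_eq_norm (hproj : ∀ a, φ (φ a) = φ a)
    (hcontr : ∀ a, ‖φ a‖ ≤ ‖a‖) (a : BH H) :
    qnorm1 ((LinearMap.ker φ : Submodule ℂ (BH H)) : Set (BH H)) a = ‖φ a‖ := by
  have hmem : φ a - a ∈ LinearMap.ker φ := by simp [hproj]
  have : Nonempty (LinearMap.ker φ : Set (BH H)) := ⟨⟨φ a - a, hmem⟩⟩
  have hbdd : BddBelow (Set.range fun k : (LinearMap.ker φ : Set (BH H)) => ‖a + k‖) :=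
    ⟨0, by rintro _ ⟨_, rfl⟩; positivity⟩
  refine le_antisymm ?_ (le_ciInf fun k => ?_)
  · simpa only [qnorm1, add_sub_cancel] using ciInf_le hbdd ⟨φ a - a, hmem⟩
  · calc ‖φ a‖ = ‖φ (a + k)‖ := by rw [map_add, LinearMap.mem_ker.mp k.2, add_zero]
      _ ≤ ‖a + k‖ := hcontr _

variable [CompleteSpace H]

theorem isPosOp_amp_one_star_mul_self (b : BH H) :
    IsPosOp (amp !![1, b; star b, star b * b]) := by
  intro w
  have hsq : ⟪w, amp !![1, b; star b, star b * b] w⟫_ℂ = ⟪w 0 + b (w 1), w 0 + b (w 1)⟫_ℂ := by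
    rw [inner_add_add_self]
    simp only [inner_amp, Fin.sum_univ_two, Matrix.of_apply, Matrix.cons_val',
      Matrix.cons_val_fin_one, Matrix.cons_val_zero, Matrix.cons_val_one, one_apply_eq_self,
      mul_apply_eq_comp, ContinuousLinearMap.star_eq_adjoint,
      ContinuousLinearMap.adjoint_inner_right]
    ring
  rw [hsq, inner_self_eq_norm_sq_to_K]
  positivity

theorem sq_norm_le_of_isPosOp_amp {b d : BH H} (h : IsPosOp (amp !![1, b; star b, d])) :
    ‖b‖ ^ 2 ≤ ‖d‖ := by
  have hvec (v : H) : ‖b v‖ ^ 2 ≤ ‖d‖ * ‖v‖ ^ 2 := by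
    have hw : (‖b v‖ : ℂ) ^ 2 ≤ ⟪v, d v⟫_ℂ := by
      simpa [inner_amp, Fin.sum_univ_two, ContinuousLinearMap.star_eq_adjoint,
        ContinuousLinearMap.adjoint_inner_right] using h (WithLp.toLp 2 ![-b v, v])
    calc ‖b v‖ ^ 2 ≤ (⟪v, d v⟫_ℂ).re := by exact_mod_cast (Complex.le_def.mp hw).1
      _ ≤ ‖⟪v, d v⟫_ℂ‖ := Complex.re_le_norm _
      _ ≤ ‖v‖ * ‖d v‖ := norm_inner_le_norm _ _
      _ ≤ ‖v‖ * (‖d‖ * ‖v‖) := by gcongr; exact d.le_opNorm v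
      _ = ‖d‖ * ‖v‖ ^ 2 := by ring
  have hb : ‖b‖ ≤ √‖d‖ := b.opNorm_le_bound (by positivity) fun v => by
    rw [← Real.sqrt_sq (norm_nonneg (b v)), ← Real.sqrt_sq (norm_nonneg v),
      ← Real.sqrt_mul (norm_nonneg d)]
    exact Real.sqrt_le_sqrt (hvec v)
  calc ‖b‖ ^ 2 ≤ √‖d‖ ^ 2 := by gcongr
    _ = ‖d‖ := Real.sq_sqrt (norm_nonneg _)

def CPfull.toPositiveLinearMap (hcp : CPfull φ) : BH H →ₚ[ℂ] BH H :=
  .mk₀ φ fun _ => hcp.map_nonneg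

theorem CPfull.map_star (hcp : CPfull φ) (a : BH H) : φ (star a) = star (φ a) :=
  φ.map_star_of_map_isSelfAdjoint (fun _ ha => ha.map' hcp.toPositiveLinearMap) a

theorem CPfull.norm_map_le_of_nonneg (hcp : CPfull φ) (hu : φ 1 = 1) {a : BH H} (ha : 0 ≤ a) :
    ‖φ a‖ ≤ ‖a‖ :=
  calc ‖φ a‖ ≤ ‖φ 1‖ * ‖a‖ := hcp.toPositiveLinearMap.norm_apply_le_of_nonneg a ha
    _ ≤ ‖a‖ := by
      rw [hu]
      exact mul_le_of_le_one_left (norm_nonneg a) ContinuousLinearMap.norm_id_le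

theorem CPfull.sq_norm_map_le (hcp : CPfull φ) (hu : φ 1 = 1) (b : BH H) :
    ‖φ b‖ ^ 2 ≤ ‖φ (star b * b)‖ := by
  apply sq_norm_le_of_isPosOp_amp
  convert hcp 2 _ (isPosOp_amp_one_star_mul_self b) using 2
  ext i j
  fin_cases i <;> fin_cases j <;> simp [hu, hcp.map_star]

theorem CPfull.norm_map_le (hcp : CPfull φ) (hu : φ 1 = 1) (b : BH H) : ‖φ b‖ ≤ ‖b‖ := by
  refine (pow_le_pow_iff_left₀ (norm_nonneg _) (norm_nonneg _) two_ne_zero).mp ?_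
  calc ‖φ b‖ ^ 2 ≤ ‖φ (star b * b)‖ := hcp.sq_norm_map_le hu b
    _ ≤ ‖star b * b‖ := hcp.norm_map_le_of_nonneg hu (star_mul_self_nonneg b)
    _ = ‖b‖ ^ 2 := by rw [CStarRing.norm_star_mul_self, sq]

theorem CPfull.norm_map_star_mul_self_of_map_eq (hcp : CPfull φ) (hu : φ 1 = 1) {s : BH H}
    (hs : φ s = s) : ‖φ (star s * s)‖ = ‖s‖ ^ 2 := by
  refine le_antisymm ?_ (by simpa only [hs] using hcp.sq_norm_map_le hu s)
  calc ‖φ (star s * s)‖ ≤ ‖star s * s‖ := hcp.norm_map_le_of_nonneg hu (star_mul_self_nonneg s)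
    _ = ‖s‖ ^ 2 := by rw [CStarRing.norm_star_mul_self, sq]

end Operators

theorem choi_effros_product_general {H : Type} [NormedAddCommGroup H] [InnerProductSpace ℂ H]
    [CompleteSpace H]
    (φ : BH H →ₗ[ℂ] BH H) (hcp : CPfull φ) (hu : φ 1 = 1)
    (hproj : ∀ a, φ (φ a) = φ a) :
    (∀ a b a' b' : BH H,
      (LinearMap.ker φ).mkQ a = (LinearMap.ker φ).mkQ a' →
      (LinearMap.ker φ).mkQ b = (LinearMap.ker φ).mkQ b' →
      (LinearMap.ker φ).mkQ (φ a * φ b) = (LinearMap.ker φ).mkQ (φ a' * φ b')) ∧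
    (∀ a : BH H,
      qnorm1 ((LinearMap.ker φ : Submodule ℂ (BH H)) : Set (BH H)) (star (φ a) * φ a) =
        (qnorm1 ((LinearMap.ker φ : Submodule ℂ (BH H)) : Set (BH H)) a) ^ 2) := by
  refine ⟨fun a b a' b' ha hb => ?_, fun a => ?_⟩
  · simp only [Submodule.mkQ_apply, Submodule.Quotient.eq, LinearMap.sub_mem_ker_iff] at ha hb ⊢
    rw [ha, hb]
  · have hcontr := hcp.norm_map_le hu
    rw [qnorm1_ker_eq_norm hproj hcontr, qnorm1_ker_eq_norm hproj hcontr]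
    exact hcp.norm_map_star_mul_self_of_map_eq hu (hproj a)

/-- for a ucp projection `φ` of `B(H)` onto an injective envelope
`S ⊆ B(H)` of `X` fixing `X`, the product `(a + ker φ) ⊙ (b + ker φ) := φ(a)φ(b) + ker φ`
on `B(H)/ker φ` is well defined and the quotient norm satisfies the C*-identity. -/
theorem choi_effros_product {H : Type} [NormedAddCommGroup H] [InnerProductSpace ℂ H]
    [CompleteSpace H] (X S : Submodule ℂ (BH H)) (h1X : (1 : BH H) ∈ X) (hXS : X ≤ S)
    (env : IsInjEnvelope X S X.subtype)
    (φ : BH H →ₗ[ℂ] BH H) (hcp : CPfull φ) (hu : φ 1 = 1)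
    (hproj : ∀ a, φ (φ a) = φ a) (hrange : ∀ a, φ a ∈ S) (hfixS : ∀ s ∈ S, φ s = s)
    (hfixX : ∀ x ∈ X, φ x = x) :
    (∀ a b a' b' : BH H,
      (LinearMap.ker φ).mkQ a = (LinearMap.ker φ).mkQ a' →
      (LinearMap.ker φ).mkQ b = (LinearMap.ker φ).mkQ b' →
      (LinearMap.ker φ).mkQ (φ a * φ b) = (LinearMap.ker φ).mkQ (φ a' * φ b')) ∧
    (∀ a : BH H,
      qnorm1 ((LinearMap.ker φ : Submodule ℂ (BH H)) : Set (BH H)) (star (φ a) * φ a) =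
        (qnorm1 ((LinearMap.ker φ : Submodule ℂ (BH H)) : Set (BH H)) a) ^ 2) :=
  choi_effros_product_general φ hcp hu hproj
end
end
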